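/- arXiv:2405.19728 — 2 statements merged into one kernel-verified Lean document; each statement's English description precedes it below -/
import Mathlib

section
/- Let p be a prime with p ≡ 7 (mod 16) and Legendre symbol (−7/p) = −1. In the quotient ring ℤ[x]/(x²+3x+4), letting α denote the image of x, one has α^((p+1)/2) ≡ 2^((p+1)/2) (mod p), i.e., α^((p+1)/2) − 2^((p+1)/2) lies in the ideal generated by p. -/
/-!
Write `β = α + 2`, so that `β² = α` and `β² - β + 2 = 0`. Modulo `p` the discriminant `-7` of
`β` is a non-residue, so Frobenius acts on `β` as conjugation, `β ^ p = 1 - β`, and hence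
`α ^ ((p + 1) / 2) = β ^ (p + 1) = β (1 - β) = 2`. Since `p ≡ 7 (mod 8)`, `2` is a quadratic
residue mod `p`, so `2 ^ ((p + 1) / 2) ≡ 2` as well.
-/

open Polynomial

section CharP

variable {A : Type*} [CommRing A] {p : ℕ} [Fact p.Prime] [CharP A p]

lemma intCast_pow_div_two_eq_legendreSym (a : ℤ) : (a : A) ^ (p / 2) = legendreSym p a := by
  rw [← map_intCast (ZMod.castHom (dvd_refl p) A), ← map_pow, ← legendreSym.eq_pow, map_intCast]

lemma intCast_pow_char (t : ℤ) : (t : A) ^ p = t := by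
  rw [← map_intCast (ZMod.castHom (dvd_refl p) A), ← map_pow, ZMod.pow_card]

lemma pow_char_eq_neg_of_sq_eq_of_legendreSym_eq_neg_one (hp : p ≠ 2) {w : A} {d : ℤ}
    (hw : w ^ 2 = d) (hd : legendreSym p d = -1) : w ^ p = -w := by
  rw [← Nat.two_mul_div_two_add_one_of_odd ((Fact.out : p.Prime).odd_of_ne_two hp), pow_succ,
    pow_mul, hw, intCast_pow_div_two_eq_legendreSym, hd, Int.cast_neg, Int.cast_one, neg_one_mul]

lemma pow_char_eq_sub_of_sq_eq_of_legendreSym_eq_neg_one (hp : p ≠ 2) {β : A} {t c : ℤ}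
    (hβ : β ^ 2 = t * β - c) (hd : legendreSym p (t ^ 2 - 4 * c) = -1) : β ^ p = t - β := by
  have hw : (2 * β - t) ^ 2 = ((t ^ 2 - 4 * c : ℤ) : A) := by
    push_cast
    linear_combination 4 * hβ
  have hfrob := pow_char_eq_neg_of_sq_eq_of_legendreSym_eq_neg_one hp hw hd
  rw [sub_pow_char, mul_pow, ← Int.cast_two, intCast_pow_char, intCast_pow_char] at hfrob
  have htwo : (2 : A) * ((p / 2 + 1 : ℕ) : A) = 1 := by
    have hp0 := CharP.cast_eq_zero A p
    rw [← Nat.two_mul_div_two_add_one_of_odd ((Fact.out : p.Prime).odd_of_ne_two hp)] at hp0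
    push_cast at hp0 ⊢
    linear_combination hp0
  push_cast at hfrob
  linear_combination ((p / 2 + 1 : ℕ) : A) * hfrob - (β ^ p - t + β) * htwo

end CharP

theorem alpha_pow_cong (p : ℕ) [Fact p.Prime] (hp16 : p % 16 = 7)
    (h7 : legendreSym p (-7) = -1) :
    (Ideal.Quotient.mk (Ideal.span {(X : ℤ[X]) ^ 2 + C 3 * X + C 4}) X) ^ ((p + 1) / 2)
      - (2 : ℤ[X] ⧸ Ideal.span {(X : ℤ[X]) ^ 2 + C 3 * X + C 4}) ^ ((p + 1) / 2)
      ∈ Ideal.span {(p : ℤ[X] ⧸ Ideal.span {(X : ℤ[X]) ^ 2 + C 3 * X + C 4})} := by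
  set I := Ideal.span {(X : ℤ[X]) ^ 2 + C 3 * X + C 4}
  by_cases hunit : IsUnit (p : ℤ[X] ⧸ I)
  · simp [Ideal.span_singleton_eq_top.mpr hunit]
  have := CharP.quotient (ℤ[X] ⧸ I) p hunit
  rw [← Ideal.Quotient.eq_zero_iff_mem, map_sub, map_pow, map_pow, map_ofNat, sub_eq_zero]
  set J := Ideal.span {(p : ℤ[X] ⧸ I)}
  set a := Ideal.Quotient.mk J (Ideal.Quotient.mk I X)
  have hα : a ^ 2 + 3 * a + 4 = 0 := by
    have hf : Ideal.Quotient.mk J (Ideal.Quotient.mk I (X ^ 2 + C 3 * X + C 4)) = 0 := by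
      rw [Ideal.Quotient.eq_zero_iff_mem.mpr (Ideal.mem_span_singleton_self _), map_zero]
    simpa [map_ofNat] using hf
  have hp2 : p ≠ 2 := by omega
  have hβ : (a + 2) ^ 2 = ((1 : ℤ) : _) * (a + 2) - ((2 : ℤ) : _) := by
    push_cast
    linear_combination hα
  have hnorm : (a + 2) ^ (p + 1) = 2 := by
    rw [pow_succ, pow_char_eq_sub_of_sq_eq_of_legendreSym_eq_neg_one (A := _ ⧸ J) hp2 hβ
      (by norm_num [h7])]
    push_cast
    linear_combination -hβ
  have htwo : (2 : (ℤ[X] ⧸ I) ⧸ J) ^ (p / 2) = 1 := by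
    have h := intCast_pow_div_two_eq_legendreSym (A := _ ⧸ J) (p := p) 2
    rw [legendreSym.at_two hp2, ZMod.χ₈_nat_eq_if_mod_eight, if_neg (by omega),
      if_pos (by omega)] at h
    exact_mod_cast h
  calc a ^ ((p + 1) / 2) = ((a + 2) ^ 2) ^ ((p + 1) / 2) := by
        congr 1
        linear_combination -hα
    _ = (a + 2) ^ (p + 1) := by rw [← pow_mul, Nat.mul_div_cancel' (by omega)]
    _ = 2 := hnorm
    _ = 2 ^ ((p + 1) / 2) := by
        rw [show (p + 1) / 2 = p / 2 + 1 by omega, pow_succ, htwo]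
        ring
end

section
/- Let p be a prime with p ≡ 1 (mod 4), and let b be an integer with Legendre symbol ((b²−4)/p) = −1. In the quotient ring ℤ[x]/(x²+bx+1) with α the image of x, there is no positive integer n such that α^(2n) ≡ −1 (mod p), i.e., such that α^(2n) + 1 lies in the ideal generated by p. -/
/-!
Reduce modulo `p`: the image `β` of `α` in `𝔽_p[x]/(x² + bx + 1)` is a root of a quadratic
whose discriminant `d = b² - 4` is a non-residue. Then `δ = 2β + b` satisfies `δ² = d`, so
Euler's criterion gives `δ^p = δ · d^((p-1)/2) = -δ`, while Frobenius gives `δ^p = 2β^p + b`.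
Hence `β^p = -b - β` is the other root and `β^(p+1) = 1`. If `β^(2n) = -1`, then
`1 = (β^(p+1))^n = (β^(2n))^((p+1)/2) = -1`, as `(p+1)/2` is odd for `p ≡ 1 (mod 4)`.
-/

open Polynomial

section CharP

variable {R : Type*} [CommRing R] {p : ℕ} [Fact p.Prime] [CharP R p]

theorem intCast_pow_half_eq_legendreSym (a : ℤ) :
    (a : R) ^ (p / 2) = legendreSym p a := by
  simpa using (congrArg (ZMod.castHom (dvd_refl p) R) (legendreSym.eq_pow p a)).symm

theorem pow_char_eq_neg_sub_of_legendreSym_eq_neg_one (hp2 : p ≠ 2) {b c : ℤ}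
    (hbc : legendreSym p (b ^ 2 - 4 * c) = -1) {β : R} (hβ : β ^ 2 + b * β + c = 0) :
    β ^ p = -b - β := by
  have hp : p = 2 * (p / 2) + 1 := by
    have := (Fact.out : p.Prime).eq_one_or_self_of_dvd 2
    omega
  have h_sq : (2 * β + b) ^ 2 = ((b ^ 2 - 4 * c : ℤ) : R) := by
    push_cast
    linear_combination 4 * hβ
  have h_euler : (2 * β + b) ^ p = -(2 * β + b) := by
    rw [hp, pow_succ, pow_mul, h_sq, intCast_pow_half_eq_legendreSym, hbc]
    push_cast
    ring
  have h_frob : (2 * β + b) ^ p = 2 * β ^ p + b := by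
    have h := map_add (frobenius R p) (2 * β) b
    rwa [map_mul, map_ofNat, map_intCast, frobenius_def, frobenius_def] at h
  have h_half : (2 : R) * ((p + 1) / 2 : ℕ) = 1 := by
    have h : ((2 * ((p + 1) / 2) : ℕ) : R) = (p : R) + 1 := by
      rw [show 2 * ((p + 1) / 2) = p + 1 by omega]
      push_cast
      ring
    push_cast at h
    rwa [CharP.cast_eq_zero R p, zero_add] at h
  linear_combination ((p + 1) / 2 : ℕ) * (h_frob.symm.trans h_euler) - (β ^ p + β + b) * h_half

theorem pow_char_succ_eq_of_legendreSym_eq_neg_one (hp2 : p ≠ 2) {b c : ℤ}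
    (hbc : legendreSym p (b ^ 2 - 4 * c) = -1) {β : R} (hβ : β ^ 2 + b * β + c = 0) :
    β ^ (p + 1) = c := by
  rw [pow_succ, pow_char_eq_neg_sub_of_legendreSym_eq_neg_one hp2 hbc hβ]
  linear_combination -hβ

end CharP

theorem neg_one_eq_one_of_pow_eq {M : Type*} [Monoid M] [HasDistribNeg M] {x : M} {m n : ℕ}
    (hm : Odd m) (hx : x ^ (2 * m) = 1) (hxn : x ^ (2 * n) = -1) : (-1 : M) = 1 := by
  calc (-1 : M) = (x ^ (2 * n)) ^ m := by rw [hxn, hm.neg_one_pow]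
    _ = (x ^ (2 * m)) ^ n := by rw [← pow_mul, ← pow_mul, mul_right_comm, mul_comm 2]
    _ = 1 := by rw [hx, one_pow]

theorem AdjoinRoot.charP_of_degree_ne_zero {K : Type*} [Field K] (p : ℕ) [CharP K p] {q : K[X]}
    (hq : q.degree ≠ 0) : CharP (AdjoinRoot q) p :=
  have := AdjoinRoot.nontrivial q hq
  charP_of_injective_algebraMap (algebraMap K (AdjoinRoot q)).injective p

theorem no_pow_cong_neg_one (p : ℕ) [Fact p.Prime] (hp4 : p % 4 = 1) (b : ℤ)
    (hb : legendreSym p (b ^ 2 - 4) = -1) :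
    ¬ ∃ n : ℕ, 0 < n ∧
      (Ideal.Quotient.mk (Ideal.span {(X : ℤ[X]) ^ 2 + C b * X + C 1}) X) ^ (2 * n) + 1
        ∈ Ideal.span {(p : ℤ[X] ⧸ Ideal.span {(X : ℤ[X]) ^ 2 + C b * X + C 1})} := by
  rintro ⟨n, -, hmem⟩
  set f : ℤ[X] := X ^ 2 + C b * X + C 1
  have hf : f.Monic ∧ f.natDegree = 2 := ⟨by unfold f; monicity!, by unfold f; compute_degree!⟩
  set q := f.map (Int.castRingHom (ZMod p))
  have : CharP (AdjoinRoot q) p := AdjoinRoot.charP_of_degree_ne_zero p <| by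
    rw [hf.1.degree_map, degree_eq_natDegree hf.1.ne_zero, hf.2]
    decide
  have : Fact (2 < p) := ⟨by have := (Fact.out : p.Prime).two_le; omega⟩
  let φ : ℤ[X] ⧸ Ideal.span {f} →+* AdjoinRoot q := AdjoinRoot.map _ f q dvd_rfl
  have hβ : AdjoinRoot.root q ^ 2 + b * AdjoinRoot.root q + (1 : ℤ) = 0 := by
    simpa [q, f] using AdjoinRoot.mk_self (f := q)
  have hβn : AdjoinRoot.root q ^ (2 * n) = -1 := by
    obtain ⟨s, hs⟩ := Ideal.mem_span_singleton'.mp hmem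
    have hα : φ (Ideal.Quotient.mk _ X) = AdjoinRoot.root q := AdjoinRoot.map_root ..
    have h := congrArg φ hs
    rw [map_mul, map_natCast, CharP.cast_eq_zero, mul_zero, map_add, map_pow, map_one, hα] at h
    linear_combination -h
  have hβp : AdjoinRoot.root q ^ (2 * ((p + 1) / 2)) = 1 := by
    rw [show 2 * ((p + 1) / 2) = p + 1 by omega]
    exact_mod_cast pow_char_succ_eq_of_legendreSym_eq_neg_one (by omega) (by simpa using hb) hβ
  exact CharP.neg_one_ne_one _ p <|
    neg_one_eq_one_of_pow_eq (Nat.odd_iff.mpr (by omega)) hβp hβn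
end
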